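/- arXiv:1909.00664 — 2 statements merged into one kernel-verified Lean document; each statement's English description precedes it below -/
import Mathlib

section
/- Let μ ≥ 0 be real, s ≥ a + 1 and t ≥ s integers. Then h_μ(t, s) = H_μ(t, s-1)/H_μ(t, a) ≤ 1. If instead -1 < μ < 0, then h_μ(t, s) ≥ 1, with h_0(t,s) = 1. -/
/-!
Writing `y = t - s + 1 ≥ 1` and `n = s - 1 - a`, the functional equation `Γ(z + 1) = z Γ(z)`
turns `Γ(y + n) / Γ(y)` into the rising factorial `y (y + 1) ⋯ (y + n - 1)`, so that
`h_μ(t, s) = y⁽ⁿ⁾ / (y + μ)⁽ⁿ⁾`. The rising factorial is increasing on `(0, ∞)`, hence the ratio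
is `≤ 1` for `μ ≥ 0`, `≥ 1` for `-1 < μ < 0` and `= 1` for `μ = 0`.
-/

noncomputable def H (μ : ℝ) (t a : ℤ) : ℝ :=
  Real.Gamma ((t : ℝ) - a + μ) / (Real.Gamma ((t : ℝ) - a) * Real.Gamma (μ + 1))

open Polynomial

theorem ascPochhammer_eval_le_eval {S : Type*} [Semiring S] [PartialOrder S]
    [IsStrictOrderedRing S] (n : ℕ) {x y : S} (hx : 0 < x) (hxy : x ≤ y) :
    (ascPochhammer S n).eval x ≤ (ascPochhammer S n).eval y := by
  induction n with
  | zero => simp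
  | succ n ih =>
    rw [ascPochhammer_succ_eval, ascPochhammer_succ_eval]
    exact mul_le_mul ih (add_le_add_left hxy _) (add_nonneg hx.le n.cast_nonneg)
      (ascPochhammer_pos n y (hx.trans_le hxy)).le

theorem Real.Gamma_add_nat_eq_mul_ascPochhammer {x : ℝ} (hx : ∀ k : ℕ, x ≠ -k) (n : ℕ) :
    Real.Gamma (x + n) = Real.Gamma x * (ascPochhammer ℝ n).eval x := by
  induction n with
  | zero => simp
  | succ n ih =>
    have hxn : x + n ≠ 0 := fun h => hx n (eq_neg_of_add_eq_zero_left h)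
    rw [Nat.cast_succ, ← add_assoc, Real.Gamma_add_one hxn, ih, ascPochhammer_succ_eval]
    ring

theorem H_div_H_sub_nat {μ : ℝ} (hμ : -1 < μ) {t b : ℤ} (hb : b < t) (n : ℕ) :
    H μ t b / H μ t (b - n) =
      (ascPochhammer ℝ n).eval ((t : ℝ) - b) / (ascPochhammer ℝ n).eval ((t : ℝ) - b + μ) := by
  unfold H
  set y : ℝ := (t : ℝ) - b
  have hy : 1 ≤ y := by
    simp only [y, le_sub_iff_add_le']
    exact_mod_cast hb
  have hyμ : 0 < y + μ := by linarith
  have hsub : (t : ℝ) - ((b - n : ℤ) : ℝ) = y + n := by push_cast; ring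
  have hΓy := Real.Gamma_add_nat_eq_mul_ascPochhammer
    (fun k => by linarith [k.cast_nonneg (α := ℝ)] : ∀ k : ℕ, y ≠ -k) n
  have hΓyμ := Real.Gamma_add_nat_eq_mul_ascPochhammer
    (fun k => by linarith [k.cast_nonneg (α := ℝ)] : ∀ k : ℕ, y + μ ≠ -k) n
  have := Real.Gamma_pos_of_pos (by linarith : (0 : ℝ) < y)
  have := Real.Gamma_pos_of_pos hyμ
  have := Real.Gamma_pos_of_pos (by linarith : 0 < μ + 1)
  have := ascPochhammer_pos n y (by linarith)
  have := ascPochhammer_pos n (y + μ) hyμ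
  rw [hsub, add_right_comm, hΓy, hΓyμ]
  field_simp

theorem h_ratio_bounds (μ : ℝ) (a s t : ℤ) (hs : a + 1 ≤ s) (ht : s ≤ t) :
    (0 ≤ μ → H μ t (s - 1) / H μ t a ≤ 1) ∧
    (-1 < μ ∧ μ < 0 → 1 ≤ H μ t (s - 1) / H μ t a) ∧
    (μ = 0 → H μ t (s - 1) / H μ t a = 1) := by
  obtain ⟨n, rfl⟩ : ∃ n : ℕ, a = s - 1 - n := ⟨(s - 1 - a).toNat, by omega⟩
  have hratio (μ : ℝ) (hμ : -1 < μ) := H_div_H_sub_nat hμ (by omega : s - 1 < t) n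
  set y : ℝ := (t : ℝ) - (s - 1 : ℤ)
  have hy : 1 ≤ y := by
    simp only [y, le_sub_iff_add_le']
    exact_mod_cast (by omega : s - 1 + 1 ≤ t)
  refine ⟨fun hμ => ?_, fun ⟨hμ₁, hμ₂⟩ => ?_, fun hμ => ?_⟩
  · rw [hratio μ (by linarith), div_le_one (ascPochhammer_pos n _ (by linarith))]
    exact ascPochhammer_eval_le_eval n (by linarith) (by linarith)
  · rw [hratio μ hμ₁, one_le_div (ascPochhammer_pos n _ (by linarith))]
    exact ascPochhammer_eval_le_eval n (by linarith) (by linarith)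
  · rw [hμ, hratio 0 (by norm_num), add_zero, div_self (ascPochhammer_pos n y (by linarith)).ne']
end

section
/- Let 1 < ν < 2, integers b ≥ a + 1, reals α, β, γ, δ ≥ 0 with β ≥ α, and ξ = (β-α)γ + αγ H_{ν-1}(b,a) + αδ H_{ν-2}(b,a) > 0. Define u(t,s) = (1/ξ)[αγ H_{ν-1}(t,a)H_{ν-1}(b,s-1) + αδ H_{ν-1}(t,a)H_{ν-2}(b,s-1) + (β-α)γ H_{ν-1}(b,s-1) + (β-α)δ H_{ν-2}(b,s-1)]. Then u(t,s) ≥ 0 for all integers t ∈ [a, b] and s ∈ [a+1, b] with t ≤ s - 1. -/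
noncomputable def xiBVP (ν : ℝ) (a b : ℤ) (α β γ δ : ℝ) : ℝ :=
  (β - α) * γ + α * γ * H (ν - 1) b a + α * δ * H (ν - 2) b a

noncomputable def uG (ν : ℝ) (a b : ℤ) (α β γ δ : ℝ) (t s : ℤ) : ℝ :=
  (1 / xiBVP ν a b α β γ δ) *
    (α * γ * H (ν - 1) t a * H (ν - 1) b (s - 1)
      + α * δ * H (ν - 1) t a * H (ν - 2) b (s - 1)
      + (β - α) * γ * H (ν - 1) b (s - 1)
      + (β - α) * δ * H (ν - 2) b (s - 1))

noncomputable def vG (ν : ℝ) (a b : ℤ) (α β γ δ : ℝ) (t s : ℤ) : ℝ :=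
  uG ν a b α β γ δ t s - H (ν - 1) t (s - 1)

noncomputable def GG (ν : ℝ) (a b : ℤ) (α β γ δ : ℝ) (t s : ℤ) : ℝ :=
  if t ≤ s - 1 then uG ν a b α β γ δ t s else vG ν a b α β γ δ t s

-- `Real.Gamma 0 = 0` makes the denominator vanish, so the convention `H_μ(a,a) = 0` is `x / 0 = 0`.
theorem H_self (μ : ℝ) (a : ℤ) : H μ a a = 0 := by
  simp [H, Real.Gamma_zero]

theorem H_pos {μ : ℝ} (hμ : -1 < μ) {t a : ℤ} (h : a < t) : 0 < H μ t a := by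
  have ht : (1 : ℝ) ≤ (t : ℝ) - a := by
    have : (a : ℝ) + 1 ≤ t := by exact_mod_cast h
    linarith
  unfold H
  exact div_pos (Real.Gamma_pos_of_pos (by linarith))
    (mul_pos (Real.Gamma_pos_of_pos (by linarith)) (Real.Gamma_pos_of_pos (by linarith)))

theorem H_nonneg {μ : ℝ} (hμ : -1 < μ) {t a : ℤ} (h : a ≤ t) : 0 ≤ H μ t a := by
  rcases h.eq_or_lt with rfl | h
  · exact (H_self _ _).ge
  · exact (H_pos hμ h).le

theorem u_nonneg_general (ν : ℝ) (hν1 : 1 < ν) (a b : ℤ)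
    (α β γ δ : ℝ) (hα : 0 ≤ α) (hγ : 0 ≤ γ) (hδ : 0 ≤ δ)
    (hba : α ≤ β) (hξ : 0 < xiBVP ν a b α β γ δ)
    (t s : ℤ) (hta : a ≤ t) (hsb : s ≤ b) :
    0 ≤ uG ν a b α β γ δ t s := by
  have hHta : 0 ≤ H (ν - 1) t a := H_nonneg (by linarith) hta
  have hHb₁ : 0 ≤ H (ν - 1) b (s - 1) := H_nonneg (by linarith) (by linarith)
  have hHb₂ : 0 ≤ H (ν - 2) b (s - 1) := H_nonneg (by linarith) (by linarith)
  have hβα : 0 ≤ β - α := sub_nonneg.2 hba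
  unfold uG
  exact mul_nonneg (one_div_nonneg.2 hξ.le) (by positivity)

theorem u_nonneg (ν : ℝ) (hν1 : 1 < ν) (hν2 : ν < 2) (a b : ℤ) (hab : a + 1 ≤ b)
    (α β γ δ : ℝ) (hα : 0 ≤ α) (hβ : 0 ≤ β) (hγ : 0 ≤ γ) (hδ : 0 ≤ δ)
    (hba : α ≤ β) (hξ : 0 < xiBVP ν a b α β γ δ)
    (t s : ℤ) (hta : a ≤ t) (htb : t ≤ b) (hsa : a + 1 ≤ s) (hsb : s ≤ b)
    (hts : t ≤ s - 1) :
    0 ≤ uG ν a b α β γ δ t s :=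
  u_nonneg_general ν hν1 a b α β γ δ hα hγ hδ hba hξ t s hta hsb
end
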